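/- arXiv:math/0503657 — 4 statements merged into one kernel-verified Lean document; each statement's English description precedes it below -/
import Mathlib

section
/- For any probability generating function f(s) = Σ_{i≥0} s^i q(i) of a probability measure q on ℕ with finite positive mean m = f'(1), the function g(s) := 1/(1 - f(s)) - 1/(m(1-s)) satisfies 0 ≤ g(s) ≤ η for all s ∈ [0,1), where η := Σ_{y≥0} y(y-1) q(y) / m². -/
open scoped ENNReal

/-!
Write `D = 1 - f(s) = ∑ q(y) (1 - s^y)` and `E = m (1 - s) = ∑ y q(y) (1 - s)`, so that
`g(s) = (E - D) / (D E)`. Bernoulli's inequality `1 - s^y ≤ y (1 - s)` gives `D ≤ E`, hence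
`g(s) ≥ 0`.
Convexity of `s ↦ s^y` gives `E - D ≤ (1 - s) T` with `T = ∑ q(y) (1 - s^y) (y - 1)`. Since
`(1 - s^y) / y` decreases in `y`, the weights `q(y) (1 - s^y)` are stochastically smaller than the
size-biased weights `y q(y)`, and a Chebyshev-type symmetrisation gives `m T ≤ D ∑ y (y - 1) q(y)`.
Hence `g(s) ≤ T / (m D) ≤ η`.
-/

theorem one_sub_pow_le_mul_one_sub {s : ℝ} (hs : -1 ≤ s) (n : ℕ) :
    1 - s ^ n ≤ n * (1 - s) := by
  have h := one_add_mul_le_pow (a := s - 1) (by linarith) n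
  rw [add_sub_cancel] at h
  linarith

/-- Convexity: the tangent to `t ↦ t ^ n` at `s` stays below the graph at `t = 1`; multiplied by `s`
to avoid `s ^ (n - 1)`. -/
theorem natCast_mul_pow_mul_one_sub_le {s : ℝ} (hs0 : 0 ≤ s) (hs1 : s ≤ 1) (n : ℕ) :
    n * s ^ n * (1 - s) ≤ s * (1 - s ^ n) := by
  induction n with
  | zero => simp
  | succ k ih =>
    have hsk : s ^ k ≤ 1 := pow_le_one₀ hs0 hs1
    have hgap : 0 ≤ s * ((1 - s) * (1 - s ^ k)) :=
      mul_nonneg hs0 (mul_nonneg (by linarith) (by linarith))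
    push_cast
    rw [pow_succ]
    nlinarith [mul_le_mul_of_nonneg_left ih hs0]

theorem natCast_mul_one_sub_sub_le {s : ℝ} (hs0 : 0 ≤ s) (hs1 : s ≤ 1) (n : ℕ) :
    n * (1 - s) - (1 - s ^ n) ≤ (1 - s) * (1 - s ^ n) * (n - 1) := by
  linear_combination natCast_mul_pow_mul_one_sub_le hs0 hs1 n

theorem natCast_mul_one_sub_pow_le_of_le {s : ℝ} (hs0 : 0 ≤ s) (hs1 : s ≤ 1) {y z : ℕ}
    (hyz : y ≤ z) : y * (1 - s ^ z) ≤ z * (1 - s ^ y) := by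
  induction z, hyz using Nat.le_induction with
  | base => rfl
  | succ z hyz ih =>
    have htangent := natCast_mul_pow_mul_one_sub_le hs0 hs1 y
    have hpow : s ^ z ≤ s ^ y := pow_le_pow_of_le_one hs0 hs1 hyz
    have hy : (0 : ℝ) ≤ y := y.cast_nonneg
    have hsy : s * (1 - s ^ y) ≤ 1 - s ^ y := by nlinarith [pow_le_one₀ (n := y) hs0 hs1]
    push_cast
    rw [pow_succ]
    nlinarith [mul_le_mul_of_nonneg_left hpow (mul_nonneg hy (sub_nonneg.2 hs1))]

theorem sub_mul_natCast_mul_one_sub_pow_nonneg {s : ℝ} (hs0 : 0 ≤ s) (hs1 : s ≤ 1) (y z : ℕ) :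
    0 ≤ ((y : ℝ) - z) * (y * (1 - s ^ z) - z * (1 - s ^ y)) := by
  rcases le_total y z with h | h
  · exact mul_nonneg_of_nonpos_of_nonpos (by simpa using h)
      (sub_nonpos.2 (natCast_mul_one_sub_pow_le_of_le hs0 hs1 h))
  · exact mul_nonneg (by simpa using h) (sub_nonneg.2 (natCast_mul_one_sub_pow_le_of_le hs0 hs1 h))

theorem tsum_le_tsum_of_add_comp_le {α : Type*} {P Q : α → ℝ} (e : α ≃ α) (hP : Summable P)
    (hQ : Summable Q) (h : ∀ a, P a + P (e a) ≤ Q a + Q (e a)) : ∑' a, P a ≤ ∑' a, Q a := by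
  have hPe : Summable fun a ↦ P (e a) := e.summable_iff.2 hP
  have hQe : Summable fun a ↦ Q (e a) := e.summable_iff.2 hQ
  have h2 := (hP.add hPe).tsum_le_tsum h (hQ.add hQe)
  rw [hP.tsum_add hPe, hQ.tsum_add hQe, e.tsum_eq, e.tsum_eq] at h2
  linarith

/-- Chebyshev's sum inequality in the form `∑ w x / ∑ w ≤ ∑ u x / ∑ u` when `w / u` decreases
along `x`. -/
theorem tsum_mul_tsum_mul_le {ι : Type*} {u w x : ι → ℝ} (hu : Summable u) (hw : Summable w)
    (hux : Summable fun i ↦ u i * x i) (hwx : Summable fun i ↦ w i * x i)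
    (h : ∀ i j, 0 ≤ (x i - x j) * (u i * w j - u j * w i)) :
    (∑' i, u i) * ∑' i, w i * x i ≤ (∑' i, u i * x i) * ∑' i, w i := by
  rw [tsum_mul_tsum_of_summable_norm hu.norm hwx.norm,
    tsum_mul_tsum_of_summable_norm hux.norm hw.norm]
  refine tsum_le_tsum_of_add_comp_le (Equiv.prodComm ι ι)
    (summable_mul_of_summable_norm hu.norm hwx.norm)
    (summable_mul_of_summable_norm hux.norm hw.norm) fun ⟨i, j⟩ ↦ ?_
  simp only [Equiv.prodComm_apply, Prod.swap_prod_mk]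
  linear_combination h i j

theorem ofReal_le_tsum_ofReal {ι : Type*} {w : ι → ℝ} (hw : ∀ i, 0 ≤ w i) {x : ℝ}
    (h : Summable w → x ≤ ∑' i, w i) : ENNReal.ofReal x ≤ ∑' i, ENNReal.ofReal (w i) := by
  by_cases hs : Summable w
  · rw [← ENNReal.ofReal_tsum_of_nonneg hw hs]
    exact ENNReal.ofReal_le_ofReal (h hs)
  · convert le_top
    by_contra hne
    exact hs (by simpa [ENNReal.toReal_ofReal (hw _)] using ENNReal.summable_toReal hne)

section GeneratingFunction

variable {q : ℕ → ℝ} {s : ℝ}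

theorem hasSum_mul_one_sub_pow (hq : ∀ y, 0 ≤ q y) {a : ℝ} (hqa : HasSum q a) (hs0 : 0 ≤ s)
    (hs1 : s ≤ 1) : HasSum (fun y ↦ q y * (1 - s ^ y)) (a - ∑' y, s ^ y * q y) := by
  have hpgf : Summable fun y ↦ s ^ y * q y :=
    hqa.summable.of_nonneg_of_le (fun y ↦ mul_nonneg (pow_nonneg hs0 y) (hq y))
      fun y ↦ mul_le_of_le_one_left (hq y) (pow_le_one₀ hs0 hs1)
  simpa only [mul_one_sub, mul_comm] using hqa.sub hpgf.hasSum

theorem pos_of_hasSum_mul_one_sub_pow (hq : ∀ y, 0 ≤ q y) {m : ℝ}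
    (hm : HasSum (fun y : ℕ ↦ (y : ℝ) * q y) m) (hmpos : 0 < m) (hs0 : 0 ≤ s) (hs1 : s < 1)
    {D : ℝ} (hD : HasSum (fun y ↦ q y * (1 - s ^ y)) D) : 0 < D := by
  obtain ⟨y, hy⟩ : ∃ y : ℕ, (y : ℝ) * q y ≠ 0 := by
    by_contra! h
    exact hmpos.ne' (hm.unique (by simp [h]))
  obtain ⟨hy0, hqy⟩ := mul_ne_zero_iff.1 hy
  have hterm : 0 < q y * (1 - s ^ y) :=
    mul_pos ((hq y).lt_of_ne' hqy) (sub_pos.2 (pow_lt_one₀ hs0 hs1 (by exact_mod_cast hy0)))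
  exact hterm.trans_le <| le_hasSum hD y fun j _ ↦
    mul_nonneg (hq j) (sub_nonneg.2 (pow_le_one₀ hs0 hs1.le))

theorem summable_mul_one_sub_pow_mul_sub_one (hq : ∀ y, 0 ≤ q y)
    (hm : Summable fun y : ℕ ↦ (y : ℝ) * q y) (hs0 : 0 ≤ s) (hs1 : s ≤ 1) :
    Summable fun y : ℕ ↦ q y * (1 - s ^ y) * (y - 1) := by
  refine hm.of_nonneg_of_le (fun y ↦ ?_) fun y ↦ ?_ <;> rcases y with _ | y
  · simp
  · have hpow := pow_le_one₀ (n := y + 1) hs0 hs1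
    push_cast
    exact mul_nonneg (mul_nonneg (hq _) (by linarith)) (by linarith)
  · simp
  · have hpow := pow_nonneg hs0 (y + 1)
    have hy := y.cast_nonneg (α := ℝ)
    push_cast
    nlinarith [hq (y + 1), mul_nonneg (mul_nonneg (hq (y + 1)) hpow) hy]

theorem mean_mul_tsum_mul_one_sub_pow_le (hq : ∀ y, 0 ≤ q y) {m D : ℝ}
    (hm : HasSum (fun y : ℕ ↦ (y : ℝ) * q y) m) (hD : HasSum (fun y ↦ q y * (1 - s ^ y)) D)
    (hV : Summable fun y : ℕ ↦ (y : ℝ) * (y - 1) * q y) (hs0 : 0 ≤ s) (hs1 : s ≤ 1) :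
    m * ∑' y : ℕ, q y * (1 - s ^ y) * (y - 1) ≤ (∑' y : ℕ, (y : ℝ) * (y - 1) * q y) * D := by
  have hV' : Summable fun y : ℕ ↦ (y : ℝ) * q y * (y - 1) := by
    simpa only [mul_right_comm] using hV
  have h := tsum_mul_tsum_mul_le (x := fun y : ℕ ↦ (y : ℝ) - 1) hm.summable hD.summable hV'
    (summable_mul_one_sub_pow_mul_sub_one hq hm.summable hs0 hs1) fun y z ↦ by
      linear_combination mul_nonneg (mul_nonneg (hq y) (hq z))
        (sub_mul_natCast_mul_one_sub_pow_nonneg hs0 hs1 y z)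
  simpa only [hm.tsum_eq, hD.tsum_eq, mul_right_comm] using h

end GeneratingFunction

theorem stmt0_general (q : ℕ → ℝ) (hq : ∀ y : ℕ, 0 ≤ q y) (hq1 : HasSum q 1)
    (m : ℝ) (hm : HasSum (fun y : ℕ => (y : ℝ) * q y) m) (hmpos : 0 < m)
    (f : ℝ → ℝ) (hf : ∀ s, f s = ∑' i : ℕ, s ^ i * q i)
    (g : ℝ → ℝ) (hg : ∀ s, g s = 1 / (1 - f s) - 1 / (m * (1 - s)))
    (s : ℝ) (hs0 : 0 ≤ s) (hs1 : s < 1) :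
    0 ≤ g s ∧
      ENNReal.ofReal (g s) ≤
        ∑' y : ℕ, ENNReal.ofReal ((y : ℝ) * ((y : ℝ) - 1) * q y / m ^ 2) := by
  have hD : HasSum (fun y ↦ q y * (1 - s ^ y)) (1 - f s) :=
    hf s ▸ hasSum_mul_one_sub_pow hq hq1 hs0 hs1.le
  have hE : HasSum (fun y : ℕ ↦ y * q y * (1 - s)) (m * (1 - s)) := hm.mul_right _
  have hDpos : 0 < 1 - f s := pos_of_hasSum_mul_one_sub_pow hq hm hmpos hs0 hs1 hD
  have hEpos : 0 < m * (1 - s) := mul_pos hmpos (by linarith)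
  have hDE : 1 - f s ≤ m * (1 - s) := hasSum_le (fun y ↦ by
    nlinarith [hq y, one_sub_pow_le_mul_one_sub (by linarith : -1 ≤ s) y]) hD hE
  refine ⟨by rw [hg, sub_nonneg]; exact one_div_le_one_div_of_le hDpos hDE, ?_⟩
  have hyy (y : ℕ) : (0 : ℝ) ≤ y * (y - 1) := by rcases y with _ | y <;> simp; positivity
  refine ofReal_le_tsum_ofReal (fun y ↦ div_nonneg (mul_nonneg (hyy y) (hq y)) (sq_nonneg m))
    fun hη ↦ ?_
  have hV := (summable_div_const_iff (pow_ne_zero 2 hmpos.ne')).1 hη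
  have hT := summable_mul_one_sub_pow_mul_sub_one hq hm.summable hs0 hs1.le
  have hA : m * (1 - s) - (1 - f s) ≤ (1 - s) * ∑' y : ℕ, q y * (1 - s ^ y) * (y - 1) :=
    hasSum_le (fun y ↦ by nlinarith [hq y, natCast_mul_one_sub_sub_le hs0 hs1.le y])
      (hE.sub hD) (hT.hasSum.mul_left _)
  have hB := mean_mul_tsum_mul_one_sub_pow_le hq hm hD hV hs0 hs1.le
  rw [tsum_div_const, hg, div_sub_div _ _ hDpos.ne' hEpos.ne', div_le_div_iff₀ (by positivity)
    (by positivity)]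
  nlinarith [mul_le_mul_of_nonneg_left hA (sq_nonneg m), mul_le_mul_of_nonneg_left hB hEpos.le]

/-- For any probability generating function `f(s) = ∑ s^i q(i)` of a probability measure `q`
on ℕ with finite positive mean `m`, the function `g(s) = 1/(1-f(s)) - 1/(m(1-s))` satisfies
`0 ≤ g(s) ≤ η` for all `s ∈ [0,1)`, where `η = ∑ y(y-1) q(y) / m²` (possibly infinite). -/
theorem stmt0 (q : ℕ → ℝ) (hq : ∀ y : ℕ, 0 ≤ q y) (hq1 : HasSum q 1)
    (m : ℝ) (hm : HasSum (fun y : ℕ => (y : ℝ) * q y) m) (hmpos : 0 < m)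
    (hq1lt : q 1 < 1)
    (f : ℝ → ℝ) (hf : ∀ s, f s = ∑' i : ℕ, s ^ i * q i)
    (g : ℝ → ℝ) (hg : ∀ s, g s = 1 / (1 - f s) - 1 / (m * (1 - s)))
    (s : ℝ) (hs0 : 0 ≤ s) (hs1 : s < 1) :
    0 ≤ g s ∧
      ENNReal.ofReal (g s) ≤
        ∑' y : ℕ, ENNReal.ofReal ((y : ℝ) * ((y : ℝ) - 1) * q y / m ^ 2) :=
  stmt0_general q hq hq1 m hm hmpos f hf g hg s hs0 hs1
end

section
/- Let f_1, …, f_n be probability generating functions with finite positive means m_j = f_j'(1), and for 0 ≤ k < n define the compositions f_{k,n}(s) = f_{k+1}(f_{k+2}(⋯ f_n(s)⋯)). Set S_j = log(m_1 ⋯ m_j) (S_0 = 0). Then for 0 ≤ s < 1 and 0 ≤ k < n, the identity 1/(1 - f_{k,n}(s)) = e^{-(S_n - S_k)}/(1 - s) + Σ_{j=k}^{n-1} g_{j+1}(f_{j+1,n}(s)) e^{-(S_j - S_k)} holds, where g_j(t) := 1/(1 - f_j(t)) - 1/(f_j'(1)(1 - t)). -/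
/-!
With `a_k = 1/(1 - f_{k,n}(s))`, the definition of `g_{k+1}` is exactly the linear recurrence
`a_k = g_{k+1}(f_{k+1,n}(s)) + m_{k+1}⁻¹ a_{k+1}`. Unrolling it from `a_n = 1/(1 - s)` gives the
formula, since `∏_{k ≤ i < j} m_{i+1}⁻¹ = e^{-(S_j - S_k)}`.
-/

open Finset

theorem eq_prod_mul_add_sum_of_recurrence {R : Type*} [CommSemiring R] {a b c : ℕ → R} {n : ℕ}
    (h : ∀ k < n, a k = b k + c k * a (k + 1)) {k : ℕ} (hk : k ≤ n) :
    a k = (∏ i ∈ Ico k n, c i) * a n + ∑ j ∈ Ico k n, b j * ∏ i ∈ Ico k j, c i := by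
  induction hk using Nat.decreasingInduction with
  | self => simp
  | of_succ k hkn ih =>
    have hsum : ∑ j ∈ Ico (k + 1) n, b j * ∏ i ∈ Ico k j, c i
        = c k * ∑ j ∈ Ico (k + 1) n, b j * ∏ i ∈ Ico (k + 1) j, c i := by
      rw [mul_sum]
      refine sum_congr rfl fun j hj => ?_
      rw [prod_eq_prod_Ico_succ_bot (by rw [mem_Ico] at hj; omega)]
      ring
    rw [h k hkn, ih, prod_eq_prod_Ico_succ_bot hkn, sum_eq_sum_Ico_succ_bot hkn, hsum, Ico_self,
      prod_empty]
    ring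

theorem exp_neg_sub_eq_prod_inv {m S : ℕ → ℝ} (hm : ∀ j, 0 < m j)
    (hS : ∀ j, S (j + 1) = S j + Real.log (m (j + 1))) {k j : ℕ} (hkj : k ≤ j) :
    Real.exp (-(S j - S k)) = ∏ i ∈ Ico k j, (m (i + 1))⁻¹ := by
  induction j, hkj using Nat.le_induction with
  | base => simp
  | succ j hkj ih =>
    rw [prod_Ico_succ_top hkj, ← ih, hS, ← Real.exp_log (hm (j + 1)), ← Real.exp_neg,
      ← Real.exp_add, Real.log_exp]
    ring_nf

theorem stmt1_general (n : ℕ)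
    (m : ℕ → ℝ)
    (hmpos : ∀ j, 0 < m j)
    (f : ℕ → ℝ → ℝ)
    (S : ℕ → ℝ) (hS : ∀ j, S j = Real.log (∏ i ∈ Finset.Icc 1 j, m i))
    (F : ℕ → ℝ → ℝ) (hFn : ∀ s, F n s = s)
    (hF : ∀ k < n, ∀ s, F k s = f (k + 1) (F (k + 1) s))
    (g : ℕ → ℝ → ℝ) (hg : ∀ j t, g j t = 1 / (1 - f j t) - 1 / (m j * (1 - t)))
    (s : ℝ) (k : ℕ) (hk : k < n) :
    1 / (1 - F k s) = Real.exp (-(S n - S k)) / (1 - s)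
      + ∑ j ∈ Finset.Ico k n, g (j + 1) (F (j + 1) s) * Real.exp (-(S j - S k)) := by
  have hSsucc : ∀ j, S (j + 1) = S j + Real.log (m (j + 1)) := fun j => by
    rw [hS, hS, prod_Icc_succ_top (by omega),
      Real.log_mul (prod_pos fun i _ => hmpos i).ne' (hmpos _).ne']
  have hexp : ∀ j, k ≤ j → Real.exp (-(S j - S k)) = ∏ i ∈ Ico k j, (m (i + 1))⁻¹ :=
    fun _ hkj => exp_neg_sub_eq_prod_inv hmpos hSsucc hkj
  have hrec : ∀ i < n, 1 / (1 - F i s)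
      = g (i + 1) (F (i + 1) s) + (m (i + 1))⁻¹ * (1 / (1 - F (i + 1) s)) := by
    intro i hi
    rw [hF i hi, hg]
    simp only [one_div, mul_inv]
    ring
  rw [eq_prod_mul_add_sum_of_recurrence hrec hk.le, hFn, ← hexp n hk.le,
    sum_congr rfl fun j hj => by rw [← hexp j (mem_Ico.1 hj).1]]
  ring

/-- For probability generating functions `f_1, …, f_n` with finite positive means
`m_j = f_j'(1)`, the compositions `f_{k,n} = f_{k+1} ∘ ⋯ ∘ f_n` satisfy, for `0 ≤ s < 1`
and `0 ≤ k < n`, the identity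
`1/(1 - f_{k,n}(s)) = e^{-(S_n - S_k)}/(1-s) + ∑_{j=k}^{n-1} g_{j+1}(f_{j+1,n}(s)) e^{-(S_j - S_k)}`,
where `S_j = log(m_1 ⋯ m_j)` and `g_j(t) = 1/(1 - f_j(t)) - 1/(m_j (1-t))`. -/
theorem stmt1 (n : ℕ) (q : ℕ → ℕ → ℝ)
    (hq : ∀ j, ∀ y : ℕ, 0 ≤ q j y) (hq1 : ∀ j, HasSum (q j) 1)
    (m : ℕ → ℝ) (hm : ∀ j, HasSum (fun y : ℕ => (y : ℝ) * q j y) (m j))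
    (hmpos : ∀ j, 0 < m j) (hq1lt : ∀ j, q j 1 < 1)
    (f : ℕ → ℝ → ℝ) (hf : ∀ j s, f j s = ∑' i : ℕ, s ^ i * q j i)
    (S : ℕ → ℝ) (hS : ∀ j, S j = Real.log (∏ i ∈ Finset.Icc 1 j, m i))
    (F : ℕ → ℝ → ℝ) (hFn : ∀ s, F n s = s)
    (hF : ∀ k < n, ∀ s, F k s = f (k + 1) (F (k + 1) s))
    (g : ℕ → ℝ → ℝ) (hg : ∀ j t, g j t = 1 / (1 - f j t) - 1 / (m j * (1 - t)))
    (s : ℝ) (hs0 : 0 ≤ s) (hs1 : s < 1) (k : ℕ) (hk : k < n) :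
    1 / (1 - F k s) = Real.exp (-(S n - S k)) / (1 - s)
      + ∑ j ∈ Finset.Ico k n, g (j + 1) (F (j + 1) s) * Real.exp (-(S j - S k)) :=
  stmt1_general n m hmpos f S hS F hFn hF g hg s k hk
end

section
/- (Agresti's estimate) With the notation of the composition identity, for 0 ≤ s < 1 and 0 ≤ k < n one has f_{k,n}(s) ≤ 1 - ( e^{-(S_n - S_k)}/(1 - s) + Σ_{j=k}^{n-1} η_{j+1} e^{-(S_j - S_k)} )^{-1}, where η_j = Σ_{y≥0} y(y-1) q_j(y) / m_j². -/
/-!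
Write `D = 1 - f(t) = ∑ q(y) (1 - t^y)` and `E = ∑ y (y - 1) q(y)`. The one-step bound
`f(t) ≤ 1 - (1 / (m (1 - t)) + E / m²)⁻¹` is equivalent to `m² (1 - t) ≤ D (m + (1 - t) E)`.
Both sides are double sums over pairs `(y, z)`; after symmetrising, each pair term follows by
AM-GM from the Bernoulli-type inequality `(1 - t) y ≤ (1 - t^y) (1 + (1 - t) (y - 1))`.

In `ℝ≥0∞` the one-step bound reads `1 / (1 - f_j(t)) ≤ m_j⁻¹ / (1 - t) + η_j`, which also holds
when `η_j = ∞` or `t = 1`. Iterating it along `f_{k,n} = f_{k+1} ∘ f_{k+1,n}` unrolls into the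
estimate, the weights `∏_{k<l≤j} m_l⁻¹` being `e^{-(S_j - S_k)}`.
-/

open scoped ENNReal
open Finset

section Elementary

variable {t : ℝ}

lemma one_add_mul_pow_succ_le_geom_sum (ht0 : 0 ≤ t) (ht1 : t ≤ 1) (y : ℕ) :
    1 + y * t ^ (y + 1) ≤ ∑ i ∈ range (y + 1), t ^ i := by
  rw [sum_range_succ', pow_zero, add_comm]
  gcongr
  calc (y : ℝ) * t ^ (y + 1) = ∑ _i ∈ range y, t ^ (y + 1) := by simp
    _ ≤ ∑ i ∈ range y, t ^ (i + 1) := sum_le_sum fun i hi =>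
      pow_le_pow_of_le_one ht0 ht1 (by simp at hi; omega)

lemma cast_le_geom_sum_mul (ht0 : 0 ≤ t) (ht1 : t ≤ 1) (y : ℕ) :
    (y : ℝ) ≤ (∑ i ∈ range y, t ^ i) * (1 + (1 - t) * (y - 1)) := by
  obtain _ | y := y
  · simp
  have hgeom := one_add_mul_pow_succ_le_geom_sum ht0 ht1 y
  have hmul := mul_neg_geom_sum t (y + 1)
  push_cast
  nlinarith [pow_le_one₀ ht0 ht1 (n := y + 1)]

lemma one_sub_mul_cast_le (ht0 : 0 ≤ t) (ht1 : t ≤ 1) (y : ℕ) :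
    (1 - t) * y ≤ (1 - t ^ y) * (1 + (1 - t) * (y - 1)) := by
  rw [← mul_neg_geom_sum, mul_assoc]
  exact mul_le_mul_of_nonneg_left (cast_le_geom_sum_mul ht0 ht1 y) (by linarith)

lemma one_add_one_sub_mul_cast_sub_one_nonneg (ht0 : 0 ≤ t) (ht1 : t ≤ 1) (x : ℕ) :
    0 ≤ 1 + (1 - t) * (x - 1) := by
  nlinarith [(Nat.cast_nonneg x : (0 : ℝ) ≤ x)]

lemma two_mul_one_sub_mul_cast_mul_cast_le (ht0 : 0 ≤ t) (ht1 : t ≤ 1) (y z : ℕ) :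
    2 * (1 - t) * y * z ≤
      (1 - t ^ y) * z * (1 + (1 - t) * (z - 1)) + (1 - t ^ z) * y * (1 + (1 - t) * (y - 1)) := by
  have hb : ∀ x : ℕ, 0 ≤ 1 - t ^ x := fun x => sub_nonneg.2 (pow_le_one₀ ht0 ht1)
  have hc := one_add_one_sub_mul_cast_sub_one_nonneg ht0 ht1
  rw [mul_assoc 2, mul_assoc 2]
  refine two_mul_le_add_of_sq_le_mul (by have := hc z; have := hb y; positivity)
    (by have := hc y; have := hb z; positivity) ?_
  -- the product of the two summands is at least `((1 - t) y z)²`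
  calc ((1 - t) * y * z) ^ 2 = ((1 - t) * y) * ((1 - t) * z) * (y * z) := by ring
    _ ≤ ((1 - t ^ y) * (1 + (1 - t) * (y - 1))) * ((1 - t ^ z) * (1 + (1 - t) * (z - 1)))
        * (y * z) := by
      have hy := one_sub_mul_cast_le ht0 ht1 y
      have hz := one_sub_mul_cast_le ht0 ht1 z
      have : 0 ≤ (1 - t) * z := mul_nonneg (by linarith) (Nat.cast_nonneg z)
      gcongr ?_ * _
      exact mul_le_mul hy hz this (mul_nonneg (hb y) (hc y))
    _ = _ := by ring

end Elementary

theorem HasSum.mul_of_nonneg {ι κ : Type*} {f : ι → ℝ} {g : κ → ℝ} {a b : ℝ}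
    (hf : HasSum f a) (hg : HasSum g b) (hf0 : 0 ≤ f) (hg0 : 0 ≤ g) :
    HasSum (fun p : ι × κ => f p.1 * g p.2) (a * b) :=
  hf.mul hg (hf.summable.mul_of_nonneg hg.summable hf0 hg0)

lemma cast_mul_cast_sub_one_nonneg (y : ℕ) : 0 ≤ (y : ℝ) * (y - 1) := by
  rcases y with _ | y
  · simp
  · push_cast; simp only [add_sub_cancel_right]; positivity

section GeneratingFunction

variable {q : ℕ → ℝ} {m E η t : ℝ}

lemma summable_pow_mul (hq : ∀ y, 0 ≤ q y) (hq1 : Summable q) (ht0 : 0 ≤ t) (ht1 : t ≤ 1) :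
    Summable fun i => t ^ i * q i :=
  hq1.of_nonneg_of_le (fun i => mul_nonneg (pow_nonneg ht0 i) (hq i))
    fun i => mul_le_of_le_one_left (hq i) (pow_le_one₀ ht0 ht1)

lemma tsum_pow_mul_mem_Icc (hq : ∀ y, 0 ≤ q y) (hq1 : HasSum q 1) (ht0 : 0 ≤ t) (ht1 : t ≤ 1) :
    ∑' i, t ^ i * q i ∈ Set.Icc 0 1 :=
  ⟨tsum_nonneg fun i => mul_nonneg (pow_nonneg ht0 i) (hq i),
    hasSum_le (fun i => mul_le_of_le_one_left (hq i) (pow_le_one₀ ht0 ht1))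
      (summable_pow_mul hq hq1.summable ht0 ht1).hasSum hq1⟩

lemma hasSum_one_sub_pow_mul (hq : ∀ y, 0 ≤ q y) (hq1 : HasSum q 1) (ht0 : 0 ≤ t) (ht1 : t ≤ 1) :
    HasSum (fun y => (1 - t ^ y) * q y) (1 - ∑' i, t ^ i * q i) := by
  simpa only [sub_mul, one_mul] using hq1.sub (summable_pow_mul hq hq1.summable ht0 ht1).hasSum

lemma sq_mul_one_sub_le (hq : ∀ y, 0 ≤ q y) (hq1 : HasSum q 1)
    (hm : HasSum (fun y : ℕ => (y : ℝ) * q y) m)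
    (hE : HasSum (fun y : ℕ => (y : ℝ) * (y - 1) * q y) E) (ht0 : 0 ≤ t) (ht1 : t ≤ 1) :
    m ^ 2 * (1 - t) ≤ (1 - ∑' i, t ^ i * q i) * (m + (1 - t) * E) := by
  have hD := hasSum_one_sub_pow_mul hq hq1 ht0 ht1
  have hM : HasSum (fun z : ℕ => z * (1 + (1 - t) * (z - 1)) * q z) (m + (1 - t) * E) := by
    convert hm.add (hE.mul_left (1 - t)) using 1
    ext z; ring
  have hb0 : ∀ y : ℕ, 0 ≤ (1 - t ^ y) * q y :=
    fun y => mul_nonneg (sub_nonneg.2 (pow_le_one₀ ht0 ht1)) (hq y)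
  have hc0 : ∀ z : ℕ, 0 ≤ z * (1 + (1 - t) * (z - 1)) * q z := fun z =>
    mul_nonneg (mul_nonneg (Nat.cast_nonneg z)
      (one_add_one_sub_mul_cast_sub_one_nonneg ht0 ht1 z)) (hq z)
  have hm0 : ∀ y : ℕ, 0 ≤ (y : ℝ) * q y := fun y => mul_nonneg (Nat.cast_nonneg y) (hq y)
  have hle : 2 * (1 - t) * (m * m) ≤
      (1 - ∑' i, t ^ i * q i) * (m + (1 - t) * E)
        + (m + (1 - t) * E) * (1 - ∑' i, t ^ i * q i) := by
    refine hasSum_le (fun ⟨y, z⟩ => ?_) ((hm.mul_of_nonneg hm hm0 hm0).mul_left (2 * (1 - t)))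
      ((hD.mul_of_nonneg hM hb0 hc0).add (hM.mul_of_nonneg hD hc0 hb0))
    calc 2 * (1 - t) * (y * q y * (z * q z)) = q y * q z * (2 * (1 - t) * y * z) := by ring
      _ ≤ q y * q z * ((1 - t ^ y) * z * (1 + (1 - t) * (z - 1))
            + (1 - t ^ z) * y * (1 + (1 - t) * (y - 1))) :=
        mul_le_mul_of_nonneg_left (two_mul_one_sub_mul_cast_mul_cast_le ht0 ht1 y z)
          (mul_nonneg (hq y) (hq z))
      _ = _ := by ring
  linarith

lemma tsum_pow_mul_le_one_sub_inv (hq : ∀ y, 0 ≤ q y) (hq1 : HasSum q 1)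
    (hm : HasSum (fun y : ℕ => (y : ℝ) * q y) m) (hmpos : 0 < m)
    (hη : HasSum (fun y : ℕ => (y : ℝ) * (y - 1) * q y / m ^ 2) η) (ht0 : 0 ≤ t) (ht1 : t < 1) :
    ∑' i, t ^ i * q i ≤ 1 - ((m * (1 - t))⁻¹ + η)⁻¹ := by
  have hE : HasSum (fun y : ℕ => (y : ℝ) * (y - 1) * q y) (m ^ 2 * η) :=
    (hη.mul_left _).congr_fun fun y => (mul_div_cancel₀ _ (pow_ne_zero 2 hmpos.ne')).symm
  have hη0 : 0 ≤ η := hasSum_le (fun y => div_nonneg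
    (mul_nonneg (cast_mul_cast_sub_one_nonneg y) (hq y)) (sq_nonneg m)) hasSum_zero hη
  have hle := sq_mul_one_sub_le hq hq1 hm hE ht0 ht1.le
  have h1t : 0 < 1 - t := by linarith
  have hM : 0 < m + (1 - t) * (m ^ 2 * η) := by positivity
  have hr : (m * (1 - t))⁻¹ + η = (m + (1 - t) * (m ^ 2 * η)) / (m ^ 2 * (1 - t)) := by
    field_simp
  rw [hr, inv_div]
  have := (div_le_iff₀ hM).2 (by linarith : m ^ 2 * (1 - t) ≤ (1 - ∑' i, t ^ i * q i) * _)
  linarith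

lemma inv_ofReal_one_sub_tsum_pow_mul_le (hq : ∀ y, 0 ≤ q y) (hq1 : HasSum q 1)
    (hm : HasSum (fun y : ℕ => (y : ℝ) * q y) m) (hmpos : 0 < m) (ht0 : 0 ≤ t) (ht1 : t ≤ 1) :
    (ENNReal.ofReal (1 - ∑' i, t ^ i * q i))⁻¹ ≤
      (ENNReal.ofReal m)⁻¹ * (ENNReal.ofReal (1 - t))⁻¹ +
        ∑' y : ℕ, ENNReal.ofReal ((y : ℝ) * (y - 1) * q y / m ^ 2) := by
  rcases ht1.lt_or_eq with ht1 | rfl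
  swap
  · simp [ENNReal.mul_top]
  by_cases hfin : ∑' y : ℕ, ENNReal.ofReal ((y : ℝ) * (y - 1) * q y / m ^ 2) = ∞
  · simp [hfin]
  have hnn : ∀ y : ℕ, 0 ≤ (y : ℝ) * (y - 1) * q y / m ^ 2 := fun y =>
    div_nonneg (mul_nonneg (cast_mul_cast_sub_one_nonneg y) (hq y)) (sq_nonneg m)
  have hsum : Summable fun y : ℕ => (y : ℝ) * (y - 1) * q y / m ^ 2 :=
    (ENNReal.summable_toReal hfin).congr fun y => ENNReal.toReal_ofReal (hnn y)
  have h1t : 0 < 1 - t := by linarith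
  have hr : 0 < (m * (1 - t))⁻¹ + ∑' y : ℕ, (y : ℝ) * (y - 1) * q y / m ^ 2 :=
    add_pos_of_pos_of_nonneg (by positivity) (tsum_nonneg hnn)
  rw [← ENNReal.ofReal_tsum_of_nonneg hnn hsum, ← ENNReal.ofReal_inv_of_pos hmpos,
    ← ENNReal.ofReal_inv_of_pos h1t, ← ENNReal.ofReal_mul (by positivity), ← mul_inv,
    ← ENNReal.ofReal_add (by positivity) (tsum_nonneg hnn), ENNReal.inv_le_iff_inv_le,
    ← ENNReal.ofReal_inv_of_pos hr]
  refine ENNReal.ofReal_le_ofReal ?_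
  linarith [tsum_pow_mul_le_one_sub_inv hq hq1 hm hmpos hsum.hasSum ht0 ht1]

end GeneratingFunction

lemma le_prod_mul_add_sum_of_le_mul_add {α : Type*} [CommSemiring α] [PartialOrder α]
    [CanonicallyOrderedAdd α] [IsOrderedRing α] {x w e : ℕ → α} {k n : ℕ} (hkn : k ≤ n)
    (hstep : ∀ i, k ≤ i → i < n → x i ≤ w (i + 1) * x (i + 1) + e (i + 1)) :
    x k ≤ (∏ l ∈ Ioc k n, w l) * x n + ∑ j ∈ Ico k n, (∏ l ∈ Ioc k j, w l) * e (j + 1) := by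
  induction n, hkn using Nat.le_induction with
  | base => simp
  | succ n hkn ih =>
    calc x k ≤ (∏ l ∈ Ioc k n, w l) * x n + ∑ j ∈ Ico k n, (∏ l ∈ Ioc k j, w l) * e (j + 1) :=
          ih fun i hki hin => hstep i hki (by omega)
      _ ≤ (∏ l ∈ Ioc k n, w l) * (w (n + 1) * x (n + 1) + e (n + 1))
          + ∑ j ∈ Ico k n, (∏ l ∈ Ioc k j, w l) * e (j + 1) := by
        gcongr; exact hstep n hkn (by omega)
      _ = _ := by
        rw [prod_Ioc_succ_top hkn, sum_Ico_succ_top hkn]; ring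

lemma ofReal_exp_neg_log_prod_sub_log_prod {m : ℕ → ℝ} (hm : ∀ i, 0 < m i) {k j : ℕ}
    (hkj : k ≤ j) :
    ENNReal.ofReal (Real.exp (-(Real.log (∏ i ∈ Icc 1 j, m i) - Real.log (∏ i ∈ Icc 1 k, m i))))
      = ∏ i ∈ Ioc k j, (ENNReal.ofReal (m i))⁻¹ := by
  have hsplit := prod_Ioc_consecutive m (Nat.zero_le k) hkj
  rw [← zero_add 1, Icc_add_one_left_eq_Ioc, Icc_add_one_left_eq_Ioc, ← hsplit,
    Real.log_mul (prod_pos fun i _ => hm i).ne' (prod_pos fun i _ => hm i).ne', add_sub_cancel_left,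
    Real.exp_neg, Real.exp_log (prod_pos fun i _ => hm i), ← prod_inv_distrib,
    ENNReal.ofReal_prod_of_nonneg fun i _ => (inv_pos.2 (hm i)).le]
  exact prod_congr rfl fun i _ => ENNReal.ofReal_inv_of_pos (hm i)

lemma ofReal_le_one_sub_inv_of_inv_le {x : ℝ} {R : ℝ≥0∞} (hx0 : 0 ≤ x) (hx1 : x ≤ 1)
    (h : (ENNReal.ofReal (1 - x))⁻¹ ≤ R) : ENNReal.ofReal x ≤ 1 - R⁻¹ := by
  rw [ENNReal.inv_le_iff_inv_le, ENNReal.ofReal_sub _ hx0, ENNReal.ofReal_one] at h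
  have hx : ENNReal.ofReal x ≤ 1 := ENNReal.ofReal_le_one.2 hx1
  refine ENNReal.le_sub_of_add_le_right
    (ne_top_of_le_ne_top ENNReal.one_ne_top (h.trans tsub_le_self)) ?_
  calc ENNReal.ofReal x + R⁻¹ ≤ ENNReal.ofReal x + (1 - ENNReal.ofReal x) := by gcongr
    _ = 1 := add_tsub_cancel_of_le hx

theorem stmt2_general (n : ℕ) (q : ℕ → ℕ → ℝ)
    (hq : ∀ j, ∀ y : ℕ, 0 ≤ q j y) (hq1 : ∀ j, HasSum (q j) 1)
    (m : ℕ → ℝ) (hm : ∀ j, HasSum (fun y : ℕ => (y : ℝ) * q j y) (m j))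
    (hmpos : ∀ j, 0 < m j)
    (f : ℕ → ℝ → ℝ) (hf : ∀ j s, f j s = ∑' i : ℕ, s ^ i * q j i)
    (S : ℕ → ℝ) (hS : ∀ j, S j = Real.log (∏ i ∈ Finset.Icc 1 j, m i))
    (F : ℕ → ℝ → ℝ) (hFn : ∀ s, F n s = s)
    (hF : ∀ k < n, ∀ s, F k s = f (k + 1) (F (k + 1) s))
    (η : ℕ → ℝ≥0∞)
    (hη : ∀ j, η j = ∑' y : ℕ, ENNReal.ofReal ((y : ℝ) * ((y : ℝ) - 1) * q j y / m j ^ 2))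
    (s : ℝ) (hs0 : 0 ≤ s) (hs1 : s < 1) (k : ℕ) (hk : k < n) :
    ENNReal.ofReal (F k s) ≤
      1 - (ENNReal.ofReal (Real.exp (-(S n - S k)) / (1 - s))
        + ∑ j ∈ Finset.Ico k n, η (j + 1) * ENNReal.ofReal (Real.exp (-(S j - S k))))⁻¹ := by
  have hrange : ∀ i ≤ n, F i s ∈ Set.Icc 0 1 := by
    intro i hi
    refine Nat.decreasingInduction (motive := fun i _ => F i s ∈ Set.Icc 0 1) ?_ ?_ hi
    · intro i hi ih
      rw [hF i hi, hf]
      exact tsum_pow_mul_mem_Icc (hq _) (hq1 _) ih.1 ih.2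
    · rw [hFn]; exact ⟨hs0, hs1.le⟩
  have hstep : ∀ i, k ≤ i → i < n → (ENNReal.ofReal (1 - F i s))⁻¹ ≤
      (ENNReal.ofReal (m (i + 1)))⁻¹ * (ENNReal.ofReal (1 - F (i + 1) s))⁻¹ + η (i + 1) := by
    intro i _ hi
    rw [hF i hi, hf, hη]
    exact inv_ofReal_one_sub_tsum_pow_mul_le (hq _) (hq1 _) (hm _) (hmpos _)
      (hrange (i + 1) hi).1 (hrange (i + 1) hi).2
  have hweight : ∀ j, k ≤ j → ENNReal.ofReal (Real.exp (-(S j - S k)))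
      = ∏ l ∈ Ioc k j, (ENNReal.ofReal (m l))⁻¹ := fun j hkj => by
    rw [hS, hS, ofReal_exp_neg_log_prod_sub_log_prod hmpos hkj]
  refine ofReal_le_one_sub_inv_of_inv_le (hrange k hk.le).1 (hrange k hk.le).2 ?_
  refine (le_prod_mul_add_sum_of_le_mul_add (x := fun i => (ENNReal.ofReal (1 - F i s))⁻¹)
    (w := fun l => (ENNReal.ofReal (m l))⁻¹) hk.le hstep).trans_eq ?_
  rw [hFn, ← hweight n hk.le, ← ENNReal.ofReal_inv_of_pos (by linarith),
    ← ENNReal.ofReal_mul (Real.exp_pos _).le, ← div_eq_mul_inv]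
  exact congrArg _ (sum_congr rfl fun j hj => by rw [hweight j (mem_Ico.1 hj).1, mul_comm])

/-- (Agresti's estimate) For the compositions `f_{k,n}` of probability generating functions
with finite positive means, for `0 ≤ s < 1` and `0 ≤ k < n`,
`f_{k,n}(s) ≤ 1 - (e^{-(S_n-S_k)}/(1-s) + ∑_{j=k}^{n-1} η_{j+1} e^{-(S_j-S_k)})⁻¹`,
where `η_j = ∑ y(y-1) q_j(y)/m_j²` (possibly infinite; the inequality is taken in `ℝ≥0∞`,
where it is trivial if the sum is infinite). -/
theorem stmt2 (n : ℕ) (q : ℕ → ℕ → ℝ)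
    (hq : ∀ j, ∀ y : ℕ, 0 ≤ q j y) (hq1 : ∀ j, HasSum (q j) 1)
    (m : ℕ → ℝ) (hm : ∀ j, HasSum (fun y : ℕ => (y : ℝ) * q j y) (m j))
    (hmpos : ∀ j, 0 < m j) (hq1lt : ∀ j, q j 1 < 1)
    (f : ℕ → ℝ → ℝ) (hf : ∀ j s, f j s = ∑' i : ℕ, s ^ i * q j i)
    (S : ℕ → ℝ) (hS : ∀ j, S j = Real.log (∏ i ∈ Finset.Icc 1 j, m i))
    (F : ℕ → ℝ → ℝ) (hFn : ∀ s, F n s = s)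
    (hF : ∀ k < n, ∀ s, F k s = f (k + 1) (F (k + 1) s))
    (η : ℕ → ℝ≥0∞)
    (hη : ∀ j, η j = ∑' y : ℕ, ENNReal.ofReal ((y : ℝ) * ((y : ℝ) - 1) * q j y / m j ^ 2))
    (s : ℝ) (hs0 : 0 ≤ s) (hs1 : s < 1) (k : ℕ) (hk : k < n) :
    ENNReal.ofReal (F k s) ≤
      1 - (ENNReal.ofReal (Real.exp (-(S n - S k)) / (1 - s))
        + ∑ j ∈ Finset.Ico k n, η (j + 1) * ENNReal.ofReal (Real.exp (-(S j - S k))))⁻¹ :=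
  stmt2_general n q hq hq1 m hm hmpos f hf S hS F hFn hF η hη s hs0 hs1 k hk
end

section
/- Let Z be a branching process in a varying environment (q_1, q_2, …) with Z_0 = 1, means m_j ∈ (0,∞), S_n = log(m_1⋯m_n), and η_j the normalized second factorial moments. If S_n → ∞ and Σ_{j=0}^∞ η_{j+1} e^{-S_j} < ∞, then the probability of ultimate survival satisfies P(Z_n > 0 for all n) ≥ ( Σ_{j=0}^∞ η_{j+1} e^{-S_j} )^{-1} > 0. -/
open scoped ENNReal

/-- Law of the sum of `k` i.i.d. random variables with law `q`. -/
noncomputable def iidSumPMF (q : PMF ℕ) : ℕ → PMF ℕ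
  | 0 => PMF.pure 0
  | k + 1 => (iidSumPMF q k).bind fun s => q.map (s + ·)

/-- Marginal laws of the branching process in varying environment `(q_1, q_2, …)`
started at `z`. -/
noncomputable def bpve (q : ℕ → PMF ℕ) (z : ℕ) : ℕ → PMF ℕ
  | 0 => PMF.pure z
  | n + 1 => (bpve q z n).bind fun k => iidSumPMF (q (n + 1)) k

/-!
The mean of `Z_n` is `e^{S_n}` and its second factorial moment is
`e^{2 S_n} ∑_{j<n} η_{j+1} e^{-S_j}`. Cauchy–Schwarz in the form `E[Z]² ≤ E[Z²] P(Z > 0)` gives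
`P(Z_n > 0) ≥ (∑_{j<n} η_{j+1} e^{-S_j} + e^{-S_n})⁻¹`. The same inequality for a single offspring
law, `m_j² ≤ E[Y(Y-1)] + m_j`, makes the bracket nondecreasing in `n`; as `e^{-S_n} → 0` it
increases to `∑_j η_{j+1} e^{-S_j}`, which therefore bounds it for every `n`.
Moments are taken in `ℝ≥0∞`, so no integrability assumptions are needed.
-/

namespace ENNReal

variable {a b c : ℝ≥0∞}

lemma sq_mul_inv (h0 : a ≠ 0) (htop : a ≠ ∞) : a ^ 2 * a⁻¹ = a := by
  rw [sq, mul_assoc, ENNReal.mul_inv_cancel h0 htop, mul_one]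

lemma sq_mul_mul_div_sq_div (ha0 : a ≠ 0) (hatop : a ≠ ∞) (hb0 : b ≠ 0) (hbtop : b ≠ ∞) :
    (a * b) ^ 2 * (c / b ^ 2 / a) = a * c := by
  have hb2 : b ^ 2 * (b ^ 2)⁻¹ = 1 :=
    ENNReal.mul_inv_cancel (pow_ne_zero 2 hb0) (ENNReal.pow_ne_top hbtop)
  calc (a * b) ^ 2 * (c / b ^ 2 / a) = a ^ 2 * a⁻¹ * c * (b ^ 2 * (b ^ 2)⁻¹) := by
        simp only [div_eq_mul_inv]; ring
    _ = a * c := by rw [sq_mul_inv ha0 hatop, hb2, mul_one]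

lemma inv_le_div_sq_div_add_inv (ha0 : a ≠ 0) (hatop : a ≠ ∞) (hb0 : b ≠ 0) (hbtop : b ≠ ∞)
    (h : b ^ 2 ≤ c + b) : a⁻¹ ≤ c / b ^ 2 / a + (a * b)⁻¹ := by
  have hab0 : a * b ≠ 0 := mul_ne_zero ha0 hb0
  have habtop : a * b ≠ ∞ := ENNReal.mul_ne_top hatop hbtop
  rw [← ENNReal.mul_le_mul_iff_right (pow_ne_zero 2 hab0) (ENNReal.pow_ne_top habtop), mul_add,
    sq_mul_mul_div_sq_div ha0 hatop hb0 hbtop, sq_mul_inv hab0 habtop, ← mul_add,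
    show (a * b) ^ 2 * a⁻¹ = a * b ^ 2 by rw [mul_pow, mul_right_comm, sq_mul_inv ha0 hatop]]
  gcongr

end ENNReal

namespace PMF

variable {α β : Type*}

lemma tsum_mul_bind_apply (p : PMF α) (f : α → PMF β) (g : β → ℝ≥0∞) :
    ∑' b, g b * p.bind f b = ∑' a, (∑' b, g b * f a b) * p a := by
  simp_rw [bind_apply, ← ENNReal.tsum_mul_left, ← ENNReal.tsum_mul_right]
  rw [ENNReal.tsum_comm]
  congr! 2 with a
  exact tsum_congr fun b => by ring

lemma tsum_mul_pure_apply (a : α) (g : α → ℝ≥0∞) : ∑' b, g b * pure a b = g a := by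
  simp [pure_apply]

lemma tsum_mul_map_apply (p : PMF α) (f : α → β) (g : β → ℝ≥0∞) :
    ∑' b, g b * p.map f b = ∑' a, g (f a) * p a := by
  simp_rw [map, tsum_mul_bind_apply, Function.comp_apply, tsum_mul_pure_apply]

lemma lintegral_toMeasure [MeasurableSpace α] [MeasurableSingletonClass α] [Countable α]
    (p : PMF α) (g : α → ℝ≥0∞) : ∫⁻ a, g a ∂p.toMeasure = ∑' a, g a * p a := by
  simp [MeasureTheory.lintegral_countable', toMeasure_apply_singleton]

lemma sq_tsum_mul_mul_apply_le [MeasurableSpace α] [MeasurableSingletonClass α] [Countable α]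
    (p : PMF α) (f g : α → ℝ≥0∞) :
    (∑' a, f a * g a * p a) ^ 2 ≤ (∑' a, f a ^ 2 * p a) * ∑' a, g a ^ 2 * p a := by
  have H := ENNReal.lintegral_mul_le_Lp_mul_Lq p.toMeasure Real.HolderConjugate.two_two
    (measurable_of_countable f).aemeasurable (measurable_of_countable g).aemeasurable
  simp only [Pi.mul_apply, lintegral_toMeasure, ENNReal.rpow_two] at H
  calc _ ≤ ((∑' a, f a ^ 2 * p a) ^ (2⁻¹ : ℝ) * (∑' a, g a ^ 2 * p a) ^ (2⁻¹ : ℝ)) ^ 2 := by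
        gcongr; simpa using H
    _ = _ := by
        rw [mul_pow, ← ENNReal.rpow_two, ← ENNReal.rpow_two, ← ENNReal.rpow_mul,
          ← ENNReal.rpow_mul]
        norm_num

noncomputable def mean (p : PMF ℕ) : ℝ≥0∞ := ∑' y : ℕ, (y : ℝ≥0∞) * p y

noncomputable def factorialMoment2 (p : PMF ℕ) : ℝ≥0∞ :=
  ∑' y : ℕ, ((y * (y - 1) : ℕ) : ℝ≥0∞) * p y

lemma mean_bind (p : PMF α) (f : α → PMF ℕ) : mean (p.bind f) = ∑' a, mean (f a) * p a :=
  tsum_mul_bind_apply p f _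

lemma factorialMoment2_bind (p : PMF α) (f : α → PMF ℕ) :
    factorialMoment2 (p.bind f) = ∑' a, factorialMoment2 (f a) * p a :=
  tsum_mul_bind_apply p f _

lemma mean_pure (a : ℕ) : mean (pure a) = a :=
  tsum_mul_pure_apply a _

lemma factorialMoment2_pure (a : ℕ) : factorialMoment2 (pure a) = ((a * (a - 1) : ℕ) : ℝ≥0∞) :=
  tsum_mul_pure_apply a _

lemma mean_map_add (p : PMF ℕ) (s : ℕ) : mean (p.map (s + ·)) = s + mean p := by
  simp_rw [mean, tsum_mul_map_apply, Nat.cast_add, add_mul, ENNReal.tsum_add,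
    ENNReal.tsum_mul_left, tsum_coe, mul_one]

lemma factorialMoment2_map_add (p : PMF ℕ) (s : ℕ) :
    factorialMoment2 (p.map (s + ·)) = ((s * (s - 1) : ℕ) : ℝ≥0∞) + 2 * s * mean p +
      factorialMoment2 p := by
  have hsplit (x : ℕ) : (s + x) * (s + x - 1) = s * (s - 1) + 2 * s * x + x * (x - 1) := by
    rcases s with _ | s <;> rcases x with _ | x <;> grind
  simp_rw [factorialMoment2, mean, tsum_mul_map_apply, hsplit, Nat.cast_add, add_mul,
    ENNReal.tsum_add, Nat.cast_mul, mul_assoc _ (_ : ℝ≥0∞) (p _), ENNReal.tsum_mul_left,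
    tsum_coe, mul_one]
  norm_num

lemma tsum_sq_mul_apply (p : PMF ℕ) :
    ∑' y : ℕ, (y : ℝ≥0∞) ^ 2 * p y = factorialMoment2 p + mean p := by
  rw [factorialMoment2, mean, ← ENNReal.tsum_add]
  refine tsum_congr fun y => ?_
  have hy : y ^ 2 = y * (y - 1) + y := by rcases y with _ | y <;> grind
  rw [← add_mul, ← Nat.cast_pow, hy, Nat.cast_add]

-- Cauchy–Schwarz applied to `Y = Y · 1_{Y > 0}`.
lemma sq_mean_le_mul_toMeasure_pos (p : PMF ℕ) :
    mean p ^ 2 ≤ (factorialMoment2 p + mean p) * p.toMeasure {k | 0 < k} := by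
  have H := sq_tsum_mul_mul_apply_le p (fun y => (y : ℝ≥0∞)) (Set.indicator {k | 0 < k} 1)
  have hmean : ∑' y : ℕ, (y : ℝ≥0∞) * Set.indicator {k | 0 < k} 1 y * p y = mean p := by
    refine tsum_congr fun y => ?_
    rcases y with _ | y <;> simp
  have hprob : ∑' y : ℕ, Set.indicator {k | 0 < k} 1 y ^ 2 * p y = p.toMeasure {k | 0 < k} := by
    rw [toMeasure_apply _ (.of_discrete)]
    refine tsum_congr fun y => ?_
    rcases y with _ | y <;> simp
  rwa [hmean, hprob, tsum_sq_mul_apply] at H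

lemma sq_mean_le (p : PMF ℕ) : mean p ^ 2 ≤ factorialMoment2 p + mean p :=
  (sq_mean_le_mul_toMeasure_pos p).trans (mul_le_of_le_one_right' MeasureTheory.prob_le_one)

lemma tsum_ofReal_mul_sub_one_mul_toReal_div_sq (p : PMF ℕ) {m : ℝ} (hm : 0 < m) :
    ∑' y : ℕ, ENNReal.ofReal ((y : ℝ) * ((y : ℝ) - 1) * (p y).toReal / m ^ 2) =
      factorialMoment2 p / ENNReal.ofReal m ^ 2 := by
  rw [factorialMoment2, div_eq_mul_inv, ← ENNReal.tsum_mul_right]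
  refine tsum_congr fun y => ?_
  have hy : (y : ℝ) * ((y : ℝ) - 1) = ((y * (y - 1) : ℕ) : ℝ) := by
    rcases y with _ | y <;> simp
  rw [hy, div_eq_mul_inv, ENNReal.ofReal_mul (by positivity), ENNReal.ofReal_mul (by positivity),
    ENNReal.ofReal_inv_of_pos (by positivity), ENNReal.ofReal_natCast,
    ENNReal.ofReal_toReal (apply_ne_top _ _), ENNReal.ofReal_pow hm.le]

end PMF

open PMF Filter Topology

lemma mean_iidSumPMF (q : PMF ℕ) (k : ℕ) : mean (iidSumPMF q k) = k * mean q := by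
  induction k with
  | zero => simp [iidSumPMF, mean_pure]
  | succ k ih =>
    simp_rw [iidSumPMF, mean_bind, mean_map_add, add_mul, ENNReal.tsum_add,
      ENNReal.tsum_mul_left, tsum_coe]
    rw [← mean, ih]
    push_cast
    ring

lemma factorialMoment2_iidSumPMF (q : PMF ℕ) (k : ℕ) :
    factorialMoment2 (iidSumPMF q k) =
      k * factorialMoment2 q + ((k * (k - 1) : ℕ) : ℝ≥0∞) * mean q ^ 2 := by
  induction k with
  | zero => simp [iidSumPMF, factorialMoment2_pure]
  | succ k ih =>
    have hsummand (s : ℕ) : factorialMoment2 (q.map (s + ·)) * iidSumPMF q k s =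
        ((s * (s - 1) : ℕ) : ℝ≥0∞) * iidSumPMF q k s + 2 * mean q * (s * iidSumPMF q k s) +
          factorialMoment2 q * iidSumPMF q k s := by
      rw [factorialMoment2_map_add]; ring
    rw [iidSumPMF, factorialMoment2_bind, tsum_congr hsummand, ENNReal.tsum_add,
      ENNReal.tsum_add, ENNReal.tsum_mul_left, ENNReal.tsum_mul_left, tsum_coe, ← mean,
      ← factorialMoment2, ih, mean_iidSumPMF,
      show (k + 1) * (k + 1 - 1) = k * (k - 1) + 2 * k by rcases k with _ | k <;> grind]
    push_cast
    ring

lemma mean_bpve (q : ℕ → PMF ℕ) (z n : ℕ) :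
    mean (bpve q z n) = z * ∏ j ∈ Finset.Icc 1 n, mean (q j) := by
  induction n with
  | zero => simp [bpve, mean_pure]
  | succ n ih =>
    simp_rw [bpve, mean_bind, mean_iidSumPMF, mul_right_comm _ (mean _), ENNReal.tsum_mul_right]
    rw [← mean, ih, Finset.prod_Icc_succ_top (Nat.le_add_left 1 n)]
    ring

lemma mean_bpve_succ (q : ℕ → PMF ℕ) (z n : ℕ) :
    mean (bpve q z (n + 1)) = mean (bpve q z n) * mean (q (n + 1)) := by
  rw [mean_bpve, mean_bpve, Finset.prod_Icc_succ_top (Nat.le_add_left 1 n), mul_assoc]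

lemma factorialMoment2_bpve_succ (q : ℕ → PMF ℕ) (z n : ℕ) :
    factorialMoment2 (bpve q z (n + 1)) =
      mean (bpve q z n) * factorialMoment2 (q (n + 1)) +
        factorialMoment2 (bpve q z n) * mean (q (n + 1)) ^ 2 := by
  simp_rw [bpve, factorialMoment2_bind, factorialMoment2_iidSumPMF, add_mul, ENNReal.tsum_add,
    mul_right_comm _ (factorialMoment2 _), mul_right_comm _ (mean _ ^ 2), ENNReal.tsum_mul_right]
  rw [← mean, ← factorialMoment2]

-- `η_{j+1} e^{-S_j}` in the paper's notation: `e^{S_j}` is the mean of `Z_j`.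
noncomputable def agrestiTerm (q : ℕ → PMF ℕ) (j : ℕ) : ℝ≥0∞ :=
  factorialMoment2 (q (j + 1)) / mean (q (j + 1)) ^ 2 / mean (bpve q 1 j)

section Agresti

variable {q : ℕ → PMF ℕ}

lemma mean_bpve_one_ne_zero (h0 : ∀ j, mean (q j) ≠ 0) (n : ℕ) : mean (bpve q 1 n) ≠ 0 := by
  rw [mean_bpve, Nat.cast_one, one_mul]
  exact Finset.prod_ne_zero_iff.2 fun j _ => h0 j

lemma mean_bpve_one_ne_top (htop : ∀ j, mean (q j) ≠ ∞) (n : ℕ) : mean (bpve q 1 n) ≠ ∞ := by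
  rw [mean_bpve, Nat.cast_one, one_mul]
  exact ENNReal.prod_ne_top fun j _ => htop j

lemma factorialMoment2_bpve_one (h0 : ∀ j, mean (q j) ≠ 0) (htop : ∀ j, mean (q j) ≠ ∞)
    (n : ℕ) :
    factorialMoment2 (bpve q 1 n) =
      mean (bpve q 1 n) ^ 2 * ∑ j ∈ Finset.range n, agrestiTerm q j := by
  induction n with
  | zero => simp [bpve, factorialMoment2_pure]
  | succ n ih =>
    rw [factorialMoment2_bpve_succ, ih, Finset.sum_range_succ, mul_add, mean_bpve_succ,
      agrestiTerm, ENNReal.sq_mul_mul_div_sq_div (mean_bpve_one_ne_zero h0 n)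
        (mean_bpve_one_ne_top htop n) (h0 _) (htop _)]
    ring

lemma inv_sum_agrestiTerm_add_inv_mean_le (h0 : ∀ j, mean (q j) ≠ 0)
    (htop : ∀ j, mean (q j) ≠ ∞) (n : ℕ) :
    (∑ j ∈ Finset.range n, agrestiTerm q j + (mean (bpve q 1 n))⁻¹)⁻¹ ≤
      (bpve q 1 n).toMeasure {k | 0 < k} := by
  have hμ0 := mean_bpve_one_ne_zero h0 n
  have hμtop := mean_bpve_one_ne_top htop n
  have hsecond : factorialMoment2 (bpve q 1 n) + mean (bpve q 1 n) =
      mean (bpve q 1 n) ^ 2 *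
        (∑ j ∈ Finset.range n, agrestiTerm q j + (mean (bpve q 1 n))⁻¹) := by
    rw [factorialMoment2_bpve_one h0 htop, mul_add, ENNReal.sq_mul_inv hμ0 hμtop]
  have hb := sq_mean_le_mul_toMeasure_pos (bpve q 1 n)
  rw [hsecond, mul_assoc, ← mul_one (_ ^ 2), mul_assoc,
    ENNReal.mul_le_mul_iff_right (pow_ne_zero 2 hμ0) (ENNReal.pow_ne_top hμtop), one_mul] at hb
  calc _ ≤ _ := le_mul_of_one_le_right' hb
    _ ≤ _ := by
      rw [← mul_assoc]
      exact mul_le_of_le_one_left' (ENNReal.inv_mul_le_one _)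

lemma monotone_sum_agrestiTerm_add_inv_mean (h0 : ∀ j, mean (q j) ≠ 0)
    (htop : ∀ j, mean (q j) ≠ ∞) :
    Monotone fun n => ∑ j ∈ Finset.range n, agrestiTerm q j + (mean (bpve q 1 n))⁻¹ := by
  refine monotone_nat_of_le_succ fun n => ?_
  rw [Finset.sum_range_succ, add_assoc, mean_bpve_succ]
  gcongr _ + ?_
  exact ENNReal.inv_le_div_sq_div_add_inv (mean_bpve_one_ne_zero h0 n)
    (mean_bpve_one_ne_top htop n) (h0 _) (htop _) (sq_mean_le _)

end Agresti

theorem inv_tsum_agrestiTerm_le_iInf_toMeasure_pos {q : ℕ → PMF ℕ} (h0 : ∀ j, mean (q j) ≠ 0)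
    (htop : ∀ j, mean (q j) ≠ ∞) (hgrow : Tendsto (fun n => mean (bpve q 1 n)) atTop (𝓝 ∞)) :
    (∑' j, agrestiTerm q j)⁻¹ ≤ ⨅ n, (bpve q 1 n).toMeasure {k | 0 < k} := by
  have hlim : Tendsto (fun n => ∑ j ∈ Finset.range n, agrestiTerm q j + (mean (bpve q 1 n))⁻¹)
      atTop (𝓝 (∑' j, agrestiTerm q j)) := by
    simpa using (ENNReal.tendsto_nat_tsum _).add (tendsto_inv_iff.2 hgrow)
  refine le_iInf fun n => le_trans ?_ (inv_sum_agrestiTerm_add_inv_mean_le h0 htop n)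
  exact ENNReal.inv_le_inv' ((monotone_sum_agrestiTerm_add_inv_mean h0 htop).ge_of_tendsto hlim n)

/-- For a branching process in a varying environment with `Z_0 = 1`, offspring means
`m_j ∈ (0,∞)`, `S_n = log(m_1⋯m_n) → ∞` and `∑_j η_{j+1} e^{-S_j} < ∞` (where `η_j` are the
normalized second factorial moments), the probability of ultimate survival (the decreasing
limit `⨅ n, P(Z_n > 0)`) is at least `(∑_j η_{j+1} e^{-S_j})⁻¹ > 0`. -/
theorem stmt17 (q : ℕ → PMF ℕ) (m : ℕ → ℝ) (hmpos : ∀ j, 0 < m j)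
    (hmean : ∀ j, ∑' y : ℕ, (y : ℝ≥0∞) * q j y = ENNReal.ofReal (m j))
    (S : ℕ → ℝ) (hS : ∀ k, S k = ∑ j ∈ Finset.Icc 1 k, Real.log (m j))
    (η : ℕ → ℝ≥0∞)
    (hη : ∀ j, η j = ∑' y : ℕ,
      ENNReal.ofReal ((y : ℝ) * ((y : ℝ) - 1) * (q j y).toReal / m j ^ 2))
    (hStop : Filter.Tendsto S Filter.atTop Filter.atTop)
    (hfin : ∑' j : ℕ, η (j + 1) * ENNReal.ofReal (Real.exp (-S j)) ≠ ⊤) :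
    ((∑' j : ℕ, η (j + 1) * ENNReal.ofReal (Real.exp (-S j)))⁻¹ ≤
        ⨅ n, (bpve q 1 n).toMeasure {k | 0 < k}) ∧
      0 < (∑' j : ℕ, η (j + 1) * ENNReal.ofReal (Real.exp (-S j)))⁻¹ := by
  have hM : ∀ j, mean (q j) = ENNReal.ofReal (m j) := hmean
  have hmeanZ (n : ℕ) : mean (bpve q 1 n) = ENNReal.ofReal (Real.exp (S n)) := by
    rw [mean_bpve, Nat.cast_one, one_mul, hS, Real.exp_sum,
      ENNReal.ofReal_prod_of_nonneg fun j _ => (Real.exp_pos _).le]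
    exact Finset.prod_congr rfl fun j _ => by rw [Real.exp_log (hmpos j), hM]
  have hterm (j : ℕ) : η (j + 1) * ENNReal.ofReal (Real.exp (-S j)) = agrestiTerm q j := by
    rw [agrestiTerm, hη, hM, PMF.tsum_ofReal_mul_sub_one_mul_toReal_div_sq _ (hmpos _), hmeanZ,
      Real.exp_neg, ENNReal.ofReal_inv_of_pos (Real.exp_pos _), div_eq_mul_inv _ (ENNReal.ofReal _)]
  have hgrow : Tendsto (fun n => mean (bpve q 1 n)) atTop (𝓝 ∞) := by
    simpa only [hmeanZ, Function.comp_def] using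
      ENNReal.tendsto_ofReal_atTop.comp (Real.tendsto_exp_atTop.comp hStop)
  simp only [hterm] at hfin ⊢
  exact ⟨inv_tsum_agrestiTerm_le_iInf_toMeasure_pos (fun j => by simpa [hM] using hmpos j)
    (fun j => by simp [hM]) hgrow, ENNReal.inv_pos.2 hfin⟩
end
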